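/- The 3×3 Hermitian matrix M = [[1/6, (√2 i)/6, −i/6], [−(√2 i)/6, 0, −√2/6], [i/6, −√2/6, −1/6]] (the CYL-6 average sensing Hamiltonian) has maximal eigenvalue minus minimal eigenvalue strictly greater than 2/3. -/

import Mathlib

/-!
Since `M` is Hermitian, `∑ λᵢ = tr M = 0` and `∑ λᵢ² = tr (M * M) = 1/3`, hence
`∑_{i<j} (λᵢ - λⱼ)² = 3 ∑ λᵢ² - (∑ λᵢ)² = 1`. Three points of an interval of width `d` have
pairwise squared distances summing to at most `2 d²`, so the spread `d` satisfies `d² ≥ 1/2 > 4/9`.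
-/

open Matrix

noncomputable def Mcyl : Matrix (Fin 3) (Fin 3) ℂ :=
  !![(1/6 : ℂ), (Real.sqrt 2 : ℂ) * Complex.I / 6, -Complex.I/6;
     -(Real.sqrt 2 : ℂ) * Complex.I / 6, 0, -(Real.sqrt 2 : ℂ)/6;
     Complex.I/6, -(Real.sqrt 2 : ℂ)/6, -(1/6 : ℂ)]

theorem sq_sub_add_sq_sub_add_sq_sub_le_of_mem_Icc {a b c m M : ℝ} (ha : a ∈ Set.Icc m M)
    (hb : b ∈ Set.Icc m M) (hc : c ∈ Set.Icc m M) :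
    (a - b) ^ 2 + (b - c) ^ 2 + (c - a) ^ 2 ≤ 2 * (M - m) ^ 2 := by
  obtain ⟨ha₁, ha₂⟩ := ha
  obtain ⟨hb₁, hb₂⟩ := hb
  obtain ⟨hc₁, hc₂⟩ := hc
  rcases le_total a b with hab | hab <;> rcases le_total b c with hbc | hbc <;>
    rcases le_total a c with hac | hac <;>
    nlinarith [mul_nonneg (sub_nonneg.2 hab) (sub_nonneg.2 hbc)]

theorem Matrix.IsHermitian.trace_mul_self_eq_sum_eigenvalues_sq {𝕜 n : Type*} [RCLike 𝕜]
    [Fintype n] [DecidableEq n] {A : Matrix n n 𝕜} (hA : A.IsHermitian) :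
    (A * A).trace = ∑ i, (hA.eigenvalues i : 𝕜) ^ 2 := by
  conv_lhs => rw [hA.spectral_theorem, ← map_mul, Unitary.conjStarAlgAut_apply, trace_mul_cycle,
    Unitary.coe_star_mul_self, one_mul, diagonal_mul_diagonal, trace_diagonal]
  simp [sq]

theorem trace_Mcyl : Mcyl.trace = 0 := by
  simp [Mcyl, trace_fin_three]

theorem trace_Mcyl_mul_Mcyl : (Mcyl * Mcyl).trace = 1 / 3 := by
  have hsqrt2 : (Real.sqrt 2 : ℂ) ^ 2 = 2 := by
    exact_mod_cast Real.sq_sqrt (by norm_num : (0 : ℝ) ≤ 2)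
  simp [Mcyl, trace_fin_three]
  ring_nf
  rw [Complex.I_sq, hsqrt2]
  norm_num

theorem cyl6_eigenvalue_spread (hM : Mcyl.IsHermitian) :
    (Finset.univ.sup' Finset.univ_nonempty hM.eigenvalues) -
      (Finset.univ.inf' Finset.univ_nonempty hM.eigenvalues) > 2/3 := by
  have hsum : ∑ i, hM.eigenvalues i = 0 := by
    simpa [trace_Mcyl] using (congrArg Complex.re hM.trace_eq_sum_eigenvalues).symm
  have hsum_sq : ∑ i, hM.eigenvalues i ^ 2 = 1 / 3 := by
    simpa [trace_Mcyl_mul_Mcyl, ← Complex.ofReal_pow] using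
      (congrArg Complex.re hM.trace_mul_self_eq_sum_eigenvalues_sq).symm
  have hmem (i : Fin 3) : hM.eigenvalues i ∈ Set.Icc
      (Finset.univ.inf' Finset.univ_nonempty hM.eigenvalues)
      (Finset.univ.sup' Finset.univ_nonempty hM.eigenvalues) :=
    ⟨Finset.inf'_le _ (Finset.mem_univ i), Finset.le_sup' _ (Finset.mem_univ i)⟩
  have hpairwise := sq_sub_add_sq_sub_add_sq_sub_le_of_mem_Icc (hmem 0) (hmem 1) (hmem 2)
  have hinf_le_sup := (hmem 0).1.trans (hmem 0).2
  rw [Fin.sum_univ_three] at hsum hsum_sq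
  nlinarith
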